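/- Consider the CGS G with states S = {s0, s1, s2, s3}, initial state s0, agents Ag = {1, 2}, Ac_1 = {a}, Ac_2 = {b1, b2}, transitions Δ(s0,(a,b1)) = s1, Δ(s0,(a,b2)) = s2, Δ(s1,(a,b1)) = s1, Δ(s1,(a,b2)) = s3, Δ(s2,(a,b2)) = s2, Δ(s2,(a,b1)) = s3, Δ(s3,(a,b1)) = Δ(s3,(a,b2)) = s0, all protocols allowing all local actions, labeling λ(s0) = λ(s1) = λ(s2) = {q} and λ(s3) = ∅, ∼_1 the identity relation, and ∼_2 the equivalence relation with classes {s0, s1, s2} and {s3}. Let π(1) = IR and π(2) = ir, and let M = (G, π). Then M, s0 ⊨ ⟨⟨{1}⟩⟩ G q under the ACGS semantics, while G, s0 ⊭_IR ⟨⟨{1}⟩⟩ G q under the CGS IR-semantics. -/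
import Mathlib


namespace ACGS

/-- Strategy types: perfect/imperfect information (`I`/`i`) and
perfect/imperfect recall (`R`/`r`). -/
inductive SType where
  | IR | Ir | iR | ir
deriving DecidableEq

/-- A concurrent game structure. -/
structure CGS (S Agt AP : Type) (Ac : Agt → Type) where
  init : Set S
  sim : Agt → S → S → Prop
  sim_equiv : ∀ i, Equivalence (sim i)
  prot : (i : Agt) → S → Set (Ac i)
  prot_nonempty : ∀ i s, (prot i s).Nonempty
  prot_sim : ∀ i s s', sim i s s' → prot i s = prot i s'
  trans : S → ((i : Agt) → Ac i) → S
  label : S → Set AP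

variable {S Agt AP : Type} {Ac : Agt → Type}

/-- A history: a nonempty list of states, most recent state first. -/
abbrev Hist (S : Type) : Type := { l : List S // l ≠ [] }

/-- The current (last) state of a history. -/
def Hist.cur (h : Hist S) : S := h.1.head h.2

def Hist.one (s : S) : Hist S := ⟨[s], by simp⟩

def Hist.cons (s : S) (h : Hist S) : Hist S := ⟨s :: h.1, by simp⟩

/-- Indistinguishability of (equal-length) histories for agent `i`:
componentwise epistemic accessibility. -/
def Hist.sim (G : CGS S Agt AP Ac) (i : Agt) (h h' : Hist S) : Prop :=
  List.Forall₂ (G.sim i) h.1 h'.1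

/-- A strategy of agent `i` (a priori with perfect information and perfect recall):
a protocol-respecting function from histories to local actions. -/
structure Strat (G : CGS S Agt AP Ac) (i : Agt) where
  act : Hist S → Ac i
  legal : ∀ h, act h ∈ G.prot i h.cur

/-- `θ` is a `σ`-strategy of agent `i`.  `Ir`- and `ir`-strategies are (extensions
to histories of) functions of the last state, `iR`-strategies respect history
indistinguishability, `ir`-strategies moreover respect state indistinguishability. -/
def StratOfType (G : CGS S Agt AP Ac) (i : Agt) : SType → Strat G i → Prop
  | .IR, _ => True
  | .Ir, θ => ∀ h h', h.cur = h'.cur → θ.act h = θ.act h'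
  | .iR, θ => ∀ h h', Hist.sim G i h h' → θ.act h = θ.act h'
  | .ir, θ => ∀ h h', G.sim i h.cur h'.cur → θ.act h = θ.act h'

/-- A full strategy profile. -/
def Profile (G : CGS S Agt AP Ac) := ∀ i, Strat G i

/-- The history of the unique play from `s` where all agents follow `η`. -/
def playHist (G : CGS S Agt AP Ac) (η : Profile G) (s : S) : ℕ → Hist S
  | 0 => Hist.one s
  | n+1 =>
    let h := playHist G η s n
    Hist.cons (G.trans h.cur fun i => (η i).act h) h

/-- The unique play from `s` where every agent follows the profile `η`. -/
def play (G : CGS S Agt AP Ac) (η : Profile G) (s : S) (n : ℕ) : S :=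
  (playHist G η s n).cur

/-- An agents' abilities augmented concurrent game structure (ACGS):
a CGS together with a strategy type for each agent; the epistemic
accessibility relation of perfect-information agents is the identity. -/
structure ACGSModel (S Agt AP : Type) (Ac : Agt → Type) where
  G : CGS S Agt AP Ac
  pi : Agt → SType
  sim_id : ∀ i, (pi i = .IR ∨ pi i = .Ir) → ∀ s s', G.sim i s s' → s = s'

/-- A collective strategy of the coalition `A`. -/
def CollStrat (M : ACGSModel S Agt AP Ac) (A : Set Agt) : Type :=
  ∀ i, i ∈ A → Strat M.G i

/-- Each member of the coalition uses a strategy of its declared type. -/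
def CollOk (M : ACGSModel S Agt AP Ac) (A : Set Agt) (ξ : CollStrat M A) : Prop :=
  ∀ i (h : i ∈ A), StratOfType M.G i (M.pi i) (ξ i h)

/-- Outcomes in an ACGS: plays from `s` in which each `i ∈ A` follows `ξ i`
and each agent outside `A` follows some `π(i)`-strategy. -/
def outcomesM (M : ACGSModel S Agt AP Ac) (s : S) (A : Set Agt) (ξ : CollStrat M A) :
    Set (ℕ → S) :=
  { ρ | ∃ η : Profile M.G, (∀ i (h : i ∈ A), η i = ξ i h) ∧
      (∀ i, i ∉ A → StratOfType M.G i (M.pi i) (η i)) ∧ ρ = play M.G η s }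

/-- A collective strategy of `A` in a plain CGS. -/
def CollStratC (G : CGS S Agt AP Ac) (A : Set Agt) : Type :=
  ∀ i, i ∈ A → Strat G i

/-- A collective `σ`-strategy. -/
def CollOkC (G : CGS S Agt AP Ac) (σ : SType) (A : Set Agt) (ξ : CollStratC G A) : Prop :=
  ∀ i (h : i ∈ A), StratOfType G i σ (ξ i h)

/-- Outcomes in a plain CGS: plays from `s` in which each `i ∈ A` follows `ξ i`
and each agent outside `A` follows an arbitrary (`IR`-) strategy. -/
def outcomesC (G : CGS S Agt AP Ac) (s : S) (A : Set Agt) (ξ : CollStratC G A) :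
    Set (ℕ → S) :=
  { ρ | ∃ η : Profile G, (∀ i (h : i ∈ A), η i = ξ i h) ∧ ρ = play G η s }


/-- The four states of the illustrating example. -/
inductive ExSt where
  | s0 | s1 | s2 | s3
deriving DecidableEq

/-- Agents: `false` is agent 1 (one action `a`, modelled by `Unit`);
`true` is agent 2 (actions `b₁, b₂`, modelled by `Bool`, `b₁ = false`). -/
abbrev ExAc : Bool → Type := fun i => cond i Bool Unit

open ExSt in
/-- The CGS of Figure 1: `Δ(s0,(a,b₁)) = s1`, `Δ(s0,(a,b₂)) = s2`,
`Δ(s1,(a,b₁)) = s1`, `Δ(s1,(a,b₂)) = s3`, `Δ(s2,(a,b₂)) = s2`,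
`Δ(s2,(a,b₁)) = s3`, `Δ(s3,(a,⋆)) = s0`; all protocols are full;
`λ(s0) = λ(s1) = λ(s2) = {q}` (with `AP = Unit`, `q = ()`) and `λ(s3) = ∅`;
`∼₁` is the identity and `∼₂` has the classes `{s0, s1, s2}` and `{s3}`. -/
def exCGS : CGS ExSt Bool Unit ExAc where
  init := {s0}
  sim := fun i s t => if i = false then s = t else ((s = s3) ↔ (t = s3))
  sim_equiv := by
    intro i
    cases i <;> simp only [if_pos, if_neg, Bool.true_eq_false, ite_true, ite_false] <;>
      constructor
    · intro s; rfl
    · intro s t h; exact h.symm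
    · intro s t u h1 h2; exact h1.trans h2
    · intro s; rfl
    · intro s t h; exact h.symm
    · intro s t u h1 h2; exact h1.trans h2
  prot := fun _ _ => Set.univ
  prot_nonempty := by
    intro i s
    cases i
    · exact ⟨(), Set.mem_univ _⟩
    · exact ⟨true, Set.mem_univ _⟩
  prot_sim := fun _ _ _ _ => rfl
  trans := fun s a =>
    match s, (a true : Bool) with
    | s0, false => s1
    | s0, true => s2
    | s1, false => s1
    | s1, true => s3
    | s2, false => s3
    | s2, true => s2
    | s3, _ => s0
  label := fun s => if s = s3 then ∅ else {()}

/-- The ACGS `M = (exCGS, π)` with `π(1) = IR` and `π(2) = ir`. -/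
def exM : ACGSModel ExSt Bool Unit ExAc where
  G := exCGS
  pi := fun i => cond i .ir .IR
  sim_id := by
    intro i h s t hsim
    cases i
    · exact hsim
    · cases h <;> simp_all [exCGS]



open ExSt in
/-- Transition as a function of the state and agent 2's action. -/
def exTr : ExSt → Bool → ExSt
  | s0, false => s1
  | s0, true => s2
  | s1, false => s1
  | s1, true => s3
  | s2, false => s3
  | s2, true => s2
  | s3, _ => s0

lemma exCGS_trans (s : ExSt) (a : ∀ i, ExAc i) : exCGS.trans s a = exTr s (a true) := rfl

open ExSt in
lemma exCGS_sim_true (s t : ExSt) : exCGS.sim true s t ↔ (s = s3 ↔ t = s3) := by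
  simp [exCGS]

open ExSt in
lemma mem_label {s : ExSt} (h : s ≠ s3) : () ∈ exCGS.label s := by
  simp [exCGS, h]

lemma Hist.cur_cons {S : Type} (s : S) (h : Hist S) : (Hist.cons s h).cur = s := rfl

open ExSt in
/-- Agent 1's trivial strategy. -/
def strat1 : Strat exCGS false where
  act := fun _ => ()
  legal := fun _ => Set.mem_univ _

open ExSt in
lemma play_ne_s3 (η : Profile exCGS)
    (h2 : StratOfType exCGS true .ir (η true)) (b : Bool)
    (hb : (η true).act (Hist.one s0) = b) (n : ℕ) :
    (playHist exCGS η s0 n).cur =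
      if n = 0 then s0 else (if b = true then s2 else s1) := by
  induction n with
  | zero => rfl
  | succ n ih =>
    have hcur : (playHist exCGS η s0 n).cur = s0 ∨
        (playHist exCGS η s0 n).cur = (if b = true then s2 else s1) := by
      rw [ih]; split_ifs <;> simp
    have hact : (η true).act (playHist exCGS η s0 n) = b := by
      rw [← hb]
      apply h2
      rw [exCGS_sim_true]
      show _ ↔ (Hist.one s0).cur = s3
      rcases hcur with h | h <;> rw [h] <;> cases b <;> simp [Hist.one, Hist.cur]
    show (Hist.cons _ _).cur = _
    rw [Hist.cur_cons]
    simp only [exCGS_trans]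
    rw [hact]
    rcases hcur with h | h <;> rw [h] <;> cases b <;> simp [exTr]

open ExSt in
/-- For the ACGS `M` of Figure 1 (with `π(1) = IR`, `π(2) = ir`) and the
coalition `A = {1}`:  `M, s0 ⊨ ⟨⟨{1}⟩⟩ G q` holds under the ACGS semantics,
while `G, s0 ⊭_IR ⟨⟨{1}⟩⟩ G q` under the CGS `IR`-semantics
(`G q` holds on a path iff `q` labels every state of the path). -/
theorem example_acgs_vs_cgs :
    (∃ ξ : CollStrat exM {false}, CollOk exM {false} ξ ∧
        ∀ ρ ∈ outcomesM exM ExSt.s0 {false} ξ, ∀ n, () ∈ exM.G.label (ρ n)) ∧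
    ¬ (∃ ξ : CollStratC exM.G {false}, CollOkC exM.G .IR {false} ξ ∧
        ∀ ρ ∈ outcomesC exM.G ExSt.s0 {false} ξ, ∀ n, () ∈ exM.G.label (ρ n)) := by
  constructor
  · refine ⟨fun i _ => by cases i; exact strat1; exact ⟨fun _ => false, fun _ => Set.mem_univ _⟩,
      ?_, ?_⟩
    · intro i h
      have : i = false := h
      subst this
      trivial
    · rintro ρ ⟨η, -, hout, rfl⟩ n
      have h2 : StratOfType exCGS true .ir (η true) := hout true (by simp)
      have hp := play_ne_s3 η h2 _ rfl n
      show () ∈ exCGS.label (play exCGS η ExSt.s0 n)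
      apply mem_label
      unfold play
      rw [hp]
      split_ifs <;> simp_all
  · rintro ⟨ξ, -, hall⟩
    set η : Profile exCGS := fun i =>
      match i with
      | false => ξ false rfl
      | true => ⟨fun h => decide (2 ≤ h.1.length), fun _ => Set.mem_univ _⟩ with hη
    have := hall (play exCGS η ExSt.s0)
      ⟨η, by rintro i rfl; rfl, rfl⟩ 2
    have h2 : play exCGS η ExSt.s0 2 = ExSt.s3 := rfl
    rw [h2] at this
    simp [exM, exCGS] at this

end ACGS
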